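/- For every odd integer k ≥ 3, Q(φ², F_{2k−1} − 1) − Q(φ, F_{2k−1} − 1) = 1 − L_{k−2}/(L_{k+1} (L_k)² (F_{k−1})²). -/

import Mathlib

def lucas : ℕ → ℕ
  | 0 => 2
  | 1 => 1
  | n + 2 => lucas (n + 1) + lucas n

noncomputable def Q (α : ℝ) (m : ℕ) : ℝ :=
  (∑ n ∈ Finset.Icc 1 m, (⌊α * n⌋ : ℝ) ^ 3) / (∑ n ∈ Finset.Icc 1 m, (⌊α * n⌋ : ℝ)) ^ 2

noncomputable def φ : ℝ := (1 + Real.sqrt 5) / 2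

/-!
Write `S_α,p(N) = ∑_{1 ≤ n < N} ⌊α n⌋ ^ p`. The range `[1, F_{j+2})` is `[1, F_{j+1})`, the point
`F_{j+1}`, and the shifted block `F_{j+1} + [1, F_j)`. On that block
`⌊φ (n + F_{j+1})⌋ = ⌊φ n⌋ + F_{j+2}`: the error `φ F_{j+1} - F_{j+2} = -ψ ^ (j+1)`, with
`ψ = -1/φ`, has size `φ ^ -(j+1)`, less than the distance from `φ n` to `ℤ`, since
`|φ n - r| |ψ n - r| = |r² - r n - n²| ≥ 1`.
Since `⌊φ² n⌋ = ⌊φ n⌋ + n`, the same holds for `φ²` with shift `F_{j+3}`. Expanding `(⌊α n⌋ + c) ^ p`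
binomially, the sums for `p ≤ 3` are polynomials in `F_j`, `F_{j+1}` and `(-1) ^ j`, checked by
induction modulo Cassini's identity. At `j = 2n + 1` with `n` even, `F_{2n+1} = a² + b²` and
`F_{2n+2} = b (2a + b)` for `a = F_n`, `b = F_{n+1}` with `b² - a b - a² = 1`; then both quotients
factor into explicit rational functions of `a, b`, and the Lucas numbers are linear in `a, b`.
-/

open Finset
open Nat (fib fib_add_two)

local notation "ψ" => Real.goldenConj

lemma phi_eq_goldenRatio : φ = Real.goldenRatio := rfl

lemma cast_fib_add_two {R : Type*} [AddMonoidWithOne R] (n : ℕ) :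
    (fib (n + 2) : R) = fib n + fib (n + 1) := by
  rw [fib_add_two, Nat.cast_add]

lemma fib_cassini {R : Type*} [CommRing R] (n : ℕ) :
    (fib (n + 1) : R) ^ 2 - fib n * fib (n + 1) - fib n ^ 2 = (-1) ^ n := by
  induction n with
  | zero => simp
  | succ n ih =>
    rw [cast_fib_add_two, pow_succ]
    linear_combination -ih

lemma lucas_add_one (n : ℕ) : lucas (n + 1) = fib n + fib (n + 2) := by
  induction n using Nat.twoStepInduction with
  | zero => rfl
  | one => rfl
  | more n ih₁ ih₂ =>
    rw [lucas, ih₂, ih₁, fib_add_two (n := n + 2), fib_add_two (n := n + 1), fib_add_two (n := n)]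
    ring

section Floor

lemma abs_goldenConj_lt_one : |ψ| < 1 :=
  abs_lt.2 ⟨Real.neg_one_lt_goldenConj, Real.goldenConj_neg.trans one_pos⟩

lemma phi_mul_sub_mul_goldenConj_mul_sub (n r : ℝ) :
    (φ * n - r) * (ψ * n - r) = r ^ 2 - r * n - n ^ 2 := by
  rw [phi_eq_goldenRatio]
  linear_combination n ^ 2 * Real.goldenRatio_mul_goldenConj - n * r * Real.goldenRatio_add_goldenConj

lemma one_le_abs_phi_mul_sub_mul_abs_goldenConj_mul_sub {n : ℤ} (hn : n ≠ 0) (r : ℤ) :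
    1 ≤ |φ * n - r| * |ψ * n - r| := by
  have hφ : φ * n - r ≠ 0 := sub_ne_zero.2 ((Real.goldenRatio_irrational.mul_intCast hn).ne_int r)
  have hψ : ψ * n - r ≠ 0 := sub_ne_zero.2 ((Real.goldenConj_irrational.mul_intCast hn).ne_int r)
  have h0 : r ^ 2 - r * n - n ^ 2 ≠ 0 := by
    have := mul_ne_zero hφ hψ
    rw [phi_mul_sub_mul_goldenConj_mul_sub] at this
    exact_mod_cast this
  rw [← abs_mul, phi_mul_sub_mul_goldenConj_mul_sub]
  exact_mod_cast Int.one_le_abs h0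

lemma sqrt_five_mul_add_one_lt_phi_pow {m n : ℕ} (hm : m ≠ 0) (hn : n < fib m) :
    √5 * n + 1 < φ ^ m := by
  have hbinet : √5 * fib m = φ ^ m - ψ ^ m := by
    rw [Real.coe_fib_eq, phi_eq_goldenRatio]; field_simp
  have hψm : -ψ ^ m ≤ -ψ := by
    rw [← abs_of_neg Real.goldenConj_neg]
    exact (neg_le_abs _).trans ((abs_pow ψ m).trans_le
      (pow_le_of_le_one (abs_nonneg _) abs_goldenConj_lt_one.le hm))
  have hn' : √5 * (n + 1) ≤ √5 * fib m := by gcongr; exact_mod_cast hn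
  have h5 : 1 < √5 := by rw [Real.lt_sqrt] <;> norm_num
  have hψ : ψ = (1 - √5) / 2 := rfl
  linarith

lemma abs_goldenConj_pow_lt_abs_phi_mul_sub {m n : ℕ} (hn0 : n ≠ 0) (hn : n < fib m) (r : ℤ) :
    |ψ ^ m| < |φ * n - r| := by
  have hm : m ≠ 0 := by rintro rfl; exact Nat.not_lt_zero n hn
  have hψm : |ψ ^ m| < 1 := by
    rw [abs_pow]; exact pow_lt_one₀ (abs_nonneg _) abs_goldenConj_lt_one hm
  rcases le_or_gt 1 |φ * n - r| with h1 | h1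
  · linarith
  set d := |φ * n - r|
  have hprod := one_le_abs_phi_mul_sub_mul_abs_goldenConj_mul_sub (n := n) (by exact_mod_cast hn0) r
  push_cast at hprod
  have hd : 0 < d := pos_of_mul_pos_left (one_pos.trans_le hprod) (abs_nonneg _)
  have hψn : |ψ * n - r| ≤ d + √5 * n := by
    have : ψ * n - r = (φ * n - r) - √5 * n := by
      rw [phi_eq_goldenRatio]; linear_combination n * Real.goldenRatio_sub_goldenConj
    rw [this]
    exact (abs_sub _ _).trans_eq (by rw [abs_of_nonneg (by positivity : (0 : ℝ) ≤ √5 * n)])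
  have hpow : |ψ ^ m| * φ ^ m = 1 := by
    rw [phi_eq_goldenRatio, ← abs_of_pos (pow_pos Real.goldenRatio_pos m), ← abs_mul, ← mul_pow,
      Real.goldenConj_mul_goldenRatio, abs_pow, abs_neg, abs_one, one_pow]
  have hgrow : 1 < d * φ ^ m := calc
    1 ≤ d * |ψ * n - r| := hprod
    _ ≤ d * (√5 * n + 1) := by gcongr; linarith
    _ < d * φ ^ m := by gcongr; exact sqrt_five_mul_add_one_lt_phi_pow hm hn
  exact lt_of_mul_lt_mul_right (hpow.trans_lt hgrow) (pow_pos Real.goldenRatio_pos m).le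

lemma floor_sub_eq_floor_of_abs_lt {x ε : ℝ} (h : ∀ r : ℤ, |ε| < |x - r|) : ⌊x - ε⌋ = ⌊x⌋ := by
  have h₀ := h ⌊x⌋
  have h₁ := h (⌊x⌋ + 1)
  push_cast at h₁
  rw [abs_of_nonneg (sub_nonneg.2 (Int.floor_le x))] at h₀
  rw [abs_of_neg (show x - (⌊x⌋ + 1) < 0 by linarith [Int.lt_floor_add_one x])] at h₁
  rw [Int.floor_eq_iff]
  constructor <;> linarith [neg_abs_le ε, le_abs_self ε]

lemma floor_phi_mul_add_fib {m n : ℕ} (hn0 : n ≠ 0) (hn : n < fib m) :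
    ⌊φ * ↑(n + fib m)⌋ = ⌊φ * n⌋ + fib (m + 1) := by
  have h := Real.fib_succ_sub_goldenRatio_mul_fib m
  rw [← phi_eq_goldenRatio] at h
  rw [show φ * ↑(n + fib m) = (φ * n - ψ ^ m) + (fib (m + 1) : ℤ) by push_cast; linarith,
    Int.floor_add_intCast,
    floor_sub_eq_floor_of_abs_lt (abs_goldenConj_pow_lt_abs_phi_mul_sub hn0 hn)]

lemma floor_phi_mul_fib (m : ℕ) : (⌊φ * fib m⌋ : ℝ) = fib (m + 1) - (1 + (-1) ^ m) / 2 := by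
  have h := Real.fib_succ_sub_goldenRatio_mul_fib m
  rw [← phi_eq_goldenRatio] at h
  have hle : |ψ ^ m| ≤ 1 := by
    rw [abs_pow]; exact pow_le_one₀ (abs_nonneg _) abs_goldenConj_lt_one.le
  rcases m.even_or_odd with hm | hm
  · have hpos : 0 < ψ ^ m := hm.pow_pos Real.goldenConj_ne_zero
    have : ⌊φ * fib m⌋ = fib (m + 1) - 1 := by
      rw [Int.floor_eq_iff]; push_cast; constructor <;> linarith [abs_le.1 hle]
    rw [this, hm.neg_one_pow]; push_cast; ring
  · have hneg : ψ ^ m < 0 := hm.pow_neg Real.goldenConj_neg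
    have hlt : |ψ ^ m| < 1 := by
      rw [abs_pow]
      exact pow_lt_one₀ (abs_nonneg _) abs_goldenConj_lt_one (by rintro rfl; exact Nat.not_odd_zero hm)
    have : ⌊φ * fib m⌋ = fib (m + 1) := by
      rw [Int.floor_eq_iff]; push_cast; constructor <;> linarith [abs_lt.1 hlt]
    rw [this, hm.neg_one_pow]; push_cast; ring

lemma floor_phi_sq_mul (n : ℕ) : ⌊φ ^ 2 * n⌋ = ⌊φ * n⌋ + n := by
  rw [phi_eq_goldenRatio, Real.goldenRatio_sq, add_mul, one_mul, Int.floor_add_natCast]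

end Floor

section BeattySum

noncomputable def beattySum (α : ℝ) (p N : ℕ) : ℝ :=
  ∑ n ∈ Ico 1 N, (⌊α * n⌋ : ℝ) ^ p

lemma Q_sub_one (α : ℝ) (N : ℕ) : Q α (N - 1) = beattySum α 3 N / beattySum α 1 N ^ 2 := by
  have : Icc 1 (N - 1) = Ico 1 N := by ext; simp only [mem_Icc, mem_Ico]; omega
  simp only [Q, beattySum, this, pow_one]

lemma sum_Ico_one_add {M : Type*} [AddCommMonoid M] (f : ℕ → M) {a b : ℕ} (ha : 1 ≤ a)
    (hb : 1 ≤ b) :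
    ∑ n ∈ Ico 1 (a + b), f n = ∑ n ∈ Ico 1 b, f n + f b + ∑ n ∈ Ico 1 a, f (n + b) := by
  rw [← sum_Ico_consecutive f hb (by omega : b ≤ a + b),
    sum_eq_sum_Ico_succ_bot (by omega : b < a + b), sum_Ico_add', add_comm 1 b, add_assoc]

lemma sum_add_pow_eq_sum_choose {R : Type*} [CommSemiring R] (s : Finset ℕ) (g : ℕ → R) (c : R)
    (p : ℕ) :
    ∑ n ∈ s, (g n + c) ^ p
      = ∑ i ∈ range (p + 1), (p.choose i : R) * c ^ (p - i) * ∑ n ∈ s, g n ^ i := by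
  simp_rw [add_pow, mul_sum]
  rw [sum_comm]
  exact sum_congr rfl fun i _ ↦ sum_congr rfl fun n _ ↦ by ring

lemma beattySum_add_of_floor_add {α c : ℝ} {a b : ℕ} (ha : 1 ≤ a) (hb : 1 ≤ b)
    (hshift : ∀ n ∈ Ico 1 a, (⌊α * ↑(n + b)⌋ : ℝ) = ⌊α * n⌋ + c) (p : ℕ) :
    beattySum α p (a + b) = beattySum α p b + (⌊α * b⌋ : ℝ) ^ p
      + ∑ i ∈ range (p + 1), (p.choose i : ℝ) * c ^ (p - i) * beattySum α i a := by
  have hblock : ∑ n ∈ Ico 1 a, (⌊α * ↑(n + b)⌋ : ℝ) ^ p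
      = ∑ n ∈ Ico 1 a, ((⌊α * n⌋ : ℝ) + c) ^ p :=
    sum_congr rfl fun n hn ↦ by rw [hshift n hn]
  rw [beattySum, sum_Ico_one_add _ ha hb, hblock, sum_add_pow_eq_sum_choose]
  rfl

theorem beattySum_fib_of_step {α : ℝ} {c : ℝ → ℝ → ℝ} {f : ℕ → ℝ → ℝ → ℝ → ℝ}
    (hshift : ∀ j n, n ≠ 0 → n < fib j →
      (⌊α * ↑(n + fib (j + 1))⌋ : ℝ) = ⌊α * n⌋ + c (fib j) (fib (j + 1)))
    (hmid : ∀ j, (⌊α * fib (j + 1)⌋ : ℝ) = c (fib j) (fib (j + 1)) - (1 - (-1) ^ j) / 2)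
    (hstep : ∀ {x y e : ℝ}, y ^ 2 - x * y - x ^ 2 = e → e ^ 2 = 1 → ∀ {p : ℕ}, p ≤ 3 →
      f p y (x + y) (-e) + (c x y - (1 - e) / 2) ^ p
        + ∑ i ∈ range (p + 1), (p.choose i : ℝ) * c x y ^ (p - i) * f i x y e
        = f p (x + y) (x + 2 * y) e)
    (h₁ : ∀ p ≤ 3, f p 1 1 (-1) = 0) (h₂ : ∀ p ≤ 3, f p 1 2 1 = 0)
    {j : ℕ} (hj : j ≠ 0) {p : ℕ} (hp : p ≤ 3) :
    beattySum α p (fib j) = f p (fib j) (fib (j + 1)) ((-1) ^ j) := by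
  obtain ⟨j, rfl⟩ := Nat.exists_eq_add_one_of_ne_zero hj
  clear hj
  induction j using Nat.twoStepInduction generalizing p with
  | zero => simpa [beattySum] using (h₁ p hp).symm
  | one => simpa [beattySum, show fib 3 = 2 by rfl] using (h₂ p hp).symm
  | more j ih₁ ih₂ =>
    simp only [add_assoc, Nat.reduceAdd] at ih₁ ih₂ ⊢
    have hpos : ∀ i, 1 ≤ fib (i + 1) := fun i ↦ Nat.fib_pos.2 i.succ_pos
    have hblock : ∀ n ∈ Ico 1 (fib (j + 1)),
        (⌊α * ↑(n + fib (j + 2))⌋ : ℝ) = ⌊α * n⌋ + c (fib (j + 1)) (fib (j + 2)) :=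
      fun n hn ↦ by rw [mem_Ico] at hn; exact hshift _ n (by omega) hn.2
    have he : ((-1 : ℝ) ^ (j + 1)) ^ 2 = 1 := by
      rw [← pow_mul]; exact Even.neg_one_pow ⟨j + 1, by ring⟩
    have h₃ : (fib (j + 3) : ℝ) = fib (j + 1) + fib (j + 2) := cast_fib_add_two (j + 1)
    have h₄ : (fib (j + 4) : ℝ) = fib (j + 1) + 2 * fib (j + 2) := by
      rw [show j + 4 = j + 2 + 2 by rfl, cast_fib_add_two, show j + 2 + 1 = j + 3 by rfl, h₃]; ring
    conv_lhs => rw [fib_add_two]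
    rw [beattySum_add_of_floor_add (hpos j) (hpos (j + 1)) hblock, ih₂ hp, hmid,
      sum_congr rfl fun i hi ↦ by rw [ih₁ ((Nat.le_of_lt_succ (mem_range.1 hi)).trans hp)], h₄, h₃,
      show (-1 : ℝ) ^ (j + 2) = -(-1) ^ (j + 1) by ring,
      show (-1 : ℝ) ^ (j + 3) = (-1) ^ (j + 1) by ring]
    exact hstep (fib_cassini (j + 1)) he hp

noncomputable def phiSumClosedForm : ℕ → ℝ → ℝ → ℝ → ℝ
  | 0, x, _, _ => x - 1
  | 1, x, y, _ => (x - 1) * (y - 1) / 2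
  | 2, x, y, e => -1/2 + 5/6*y + 1/6*e*y - 1/2*y^2 + 1/3*x - 1/6*e*x - 1/2*x*y + 1/3*x*y^2
  | 3, x, y, e => 1/2 - 5/4*y - 1/4*e*y + 5/4*y^2 + 1/4*e*y^2 - 1/2*y^3 - 1/4*x + 1/4*e*x
      + 1/2*x*y - 1/4*e*x*y - 1/2*x*y^2 + 1/4*x*y^3
  | _, _, _, _ => 0

noncomputable def phiSqSumClosedForm : ℕ → ℝ → ℝ → ℝ → ℝ
  | 0, x, _, _ => x - 1
  | 1, x, y, _ => (x - 1) * (x + y - 1) / 2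
  | 2, x, y, e => -1/2 + e + y - 1/3*e*y - 3/2*y^2 + 1/3*y^3 + 4/3*x - 1/6*e*x - 1/2*x*y
      + 1/3*x*y^2
  | 3, x, y, e => 1/2 - 2*e - 3/2*y + 3/2*e*y + 7/2*y^2 - 1/2*e*y^2 - 2*y^3 + 1/2*y^4 - 7/4*x
      + 3/4*e*x + 3/2*x*y - 1/4*e*x*y - 3/2*x*y^2 + 1/4*x*y^3
  | _, _, _, _ => 0

theorem phiSumClosedForm_step {x y e : ℝ} (hcas : y ^ 2 - x * y - x ^ 2 = e) (he : e ^ 2 = 1)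
    {p : ℕ} (hp : p ≤ 3) :
    phiSumClosedForm p y (x + y) (-e) + (x + y - (1 - e) / 2) ^ p
      + ∑ i ∈ range (p + 1), (p.choose i : ℝ) * (x + y) ^ (p - i) * phiSumClosedForm i x y e
      = phiSumClosedForm p (x + y) (x + 2 * y) e := by
  interval_cases p <;>
    simp only [phiSumClosedForm, sum_range_succ, sum_range_zero, Nat.choose_zero_right,
      Nat.choose_one_right, Nat.choose_self, Nat.choose_succ_self_right, Nat.reduceSub,
      Nat.reduceAdd] <;>
    grind

theorem phiSqSumClosedForm_step {x y e : ℝ} (hcas : y ^ 2 - x * y - x ^ 2 = e) (he : e ^ 2 = 1)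
    {p : ℕ} (hp : p ≤ 3) :
    phiSqSumClosedForm p y (x + y) (-e) + (x + 2 * y - (1 - e) / 2) ^ p
      + ∑ i ∈ range (p + 1), (p.choose i : ℝ) * (x + 2 * y) ^ (p - i) * phiSqSumClosedForm i x y e
      = phiSqSumClosedForm p (x + y) (x + 2 * y) e := by
  interval_cases p <;>
    simp only [phiSqSumClosedForm, sum_range_succ, sum_range_zero, Nat.choose_zero_right,
      Nat.choose_one_right, Nat.choose_self, Nat.choose_succ_self_right, Nat.reduceSub,
      Nat.reduceAdd] <;>
    grind

theorem beattySum_phi_fib {j : ℕ} (hj : j ≠ 0) {p : ℕ} (hp : p ≤ 3) :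
    beattySum φ p (fib j) = phiSumClosedForm p (fib j) (fib (j + 1)) ((-1) ^ j) :=
  beattySum_fib_of_step (c := fun x y ↦ x + y)
    (fun j n hn0 hn ↦ by
      rw [← cast_fib_add_two]
      exact_mod_cast floor_phi_mul_add_fib hn0 (hn.trans_le (Nat.fib_mono j.le_succ)))
    (fun j ↦ by rw [floor_phi_mul_fib, cast_fib_add_two, pow_succ]; ring)
    phiSumClosedForm_step
    (fun p hp ↦ by interval_cases p <;> norm_num [phiSumClosedForm])
    (fun p hp ↦ by interval_cases p <;> norm_num [phiSumClosedForm]) hj hp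

theorem beattySum_phi_sq_fib {j : ℕ} (hj : j ≠ 0) {p : ℕ} (hp : p ≤ 3) :
    beattySum (φ ^ 2) p (fib j) = phiSqSumClosedForm p (fib j) (fib (j + 1)) ((-1) ^ j) :=
  beattySum_fib_of_step (c := fun x y ↦ x + 2 * y)
    (fun j n hn0 hn ↦ by
      rw [floor_phi_sq_mul, floor_phi_sq_mul,
        floor_phi_mul_add_fib hn0 (hn.trans_le (Nat.fib_mono j.le_succ))]
      push_cast [fib_add_two]; ring)
    (fun j ↦ by
      rw [floor_phi_sq_mul]; push_cast
      rw [floor_phi_mul_fib, cast_fib_add_two, pow_succ]; ring)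
    phiSqSumClosedForm_step
    (fun p hp ↦ by interval_cases p <;> norm_num [phiSqSumClosedForm])
    (fun p hp ↦ by interval_cases p <;> norm_num [phiSqSumClosedForm]) hj hp

end BeattySum

section OddIndex

variable {n : ℕ}

theorem Q_phi_fib_two_mul_add_one (hn : Even n) (hn0 : n ≠ 0) :
    Q φ (fib (2 * n + 1) - 1) =
      ((fib n + fib (n + 1)) ^ 3 - 2 * fib (n + 1) ^ 3 : ℝ)
        / (fib n ^ 2 * (fib n + 3 * fib (n + 1))) := by
  have hcas : (fib (n + 1) : ℝ) ^ 2 - fib n * fib (n + 1) - fib n ^ 2 = 1 := by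
    rw [fib_cassini, hn.neg_one_pow]
  have ha : (0 : ℝ) < fib n := by exact_mod_cast Nat.fib_pos.2 (Nat.pos_of_ne_zero hn0)
  have hb : (0 : ℝ) < fib (n + 1) := by exact_mod_cast Nat.fib_pos.2 n.succ_pos
  rw [Q_sub_one, beattySum_phi_fib (by omega) (by norm_num),
    beattySum_phi_fib (by omega) (by norm_num), Nat.fib_two_mul_add_one,
    show 2 * n + 1 + 1 = 2 * n + 2 by rfl, Nat.fib_two_mul_add_two, Odd.neg_one_pow ⟨n, rfl⟩]
  push_cast
  set a : ℝ := (fib n : ℝ)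
  set b : ℝ := (fib (n + 1) : ℝ)
  have hT₁ : phiSumClosedForm 1 (b ^ 2 + a ^ 2) (b * (2 * a + b)) (-1)
      = a ^ 2 * (2 * a + b) * (a + 3 * b) / 2 := by
    simp only [phiSumClosedForm]; grind
  have hT₃ : phiSumClosedForm 3 (b ^ 2 + a ^ 2) (b * (2 * a + b)) (-1)
      = a ^ 2 * (2 * a + b) ^ 2 * (a + 3 * b) * ((a + b) ^ 3 - 2 * b ^ 3) / 4 := by
    simp only [phiSumClosedForm]; grind
  rw [hT₁, hT₃]
  field_simp
  ring

theorem Q_phi_sq_fib_two_mul_add_one (hn : Even n) (hn0 : n ≠ 0) :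
    Q (φ ^ 2) (fib (2 * n + 1) - 1) =
      (5 * fib n ^ 3 + 12 * fib n ^ 2 * fib (n + 1) + 7 * fib n * fib (n + 1) ^ 2
        - 2 * fib (n + 1) ^ 3 : ℝ) / (fib n * (2 * fib n + fib (n + 1)) ^ 2) := by
  have hcas : (fib (n + 1) : ℝ) ^ 2 - fib n * fib (n + 1) - fib n ^ 2 = 1 := by
    rw [fib_cassini, hn.neg_one_pow]
  have ha : (0 : ℝ) < fib n := by exact_mod_cast Nat.fib_pos.2 (Nat.pos_of_ne_zero hn0)
  have hb : (0 : ℝ) < fib (n + 1) := by exact_mod_cast Nat.fib_pos.2 n.succ_pos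
  rw [Q_sub_one, beattySum_phi_sq_fib (by omega) (by norm_num),
    beattySum_phi_sq_fib (by omega) (by norm_num), Nat.fib_two_mul_add_one,
    show 2 * n + 1 + 1 = 2 * n + 2 by rfl, Nat.fib_two_mul_add_two, Odd.neg_one_pow ⟨n, rfl⟩]
  push_cast
  set a : ℝ := (fib n : ℝ)
  set b : ℝ := (fib (n + 1) : ℝ)
  have hV₁ : phiSqSumClosedForm 1 (b ^ 2 + a ^ 2) (b * (2 * a + b)) (-1)
      = a * (a + b) * (2 * a + b) ^ 2 / 2 := by
    simp only [phiSqSumClosedForm]; grind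
  have hV₃ : phiSqSumClosedForm 3 (b ^ 2 + a ^ 2) (b * (2 * a + b)) (-1)
      = a * (a + b) ^ 2 * (2 * a + b) ^ 2
        * (5 * a ^ 3 + 12 * a ^ 2 * b + 7 * a * b ^ 2 - 2 * b ^ 3) / 4 := by
    simp only [phiSqSumClosedForm]; grind
  rw [hV₁, hV₃]
  field_simp
  ring

end OddIndex

theorem Q_diff_odd_index_odd_k (k : ℕ) (hk : 3 ≤ k) (hko : Odd k) :
    Q (φ ^ 2) (Nat.fib (2 * k - 1) - 1) - Q φ (Nat.fib (2 * k - 1) - 1) =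
      1 - (lucas (k - 2) : ℝ) /
        ((lucas (k + 1) : ℝ) * (lucas k : ℝ) ^ 2 * (Nat.fib (k - 1) : ℝ) ^ 2) := by
  obtain ⟨n, rfl⟩ : ∃ n, k = n + 3 := ⟨k - 3, by omega⟩
  have hn : Even (n + 2) := by simpa [Nat.even_add_one, parity_simps] using hko
  rw [show 2 * (n + 3) - 1 = 2 * (n + 2) + 1 by omega, Q_phi_sq_fib_two_mul_add_one hn (by omega),
    Q_phi_fib_two_mul_add_one hn (by omega), show n + 3 - 2 = n + 1 by omega,
    show n + 3 - 1 = n + 2 by omega, show n + 3 = n + 2 + 1 by rfl, lucas_add_one, lucas_add_one,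
    lucas_add_one]
  have hcas := fib_cassini (R := ℝ) (n + 2)
  rw [hn.neg_one_pow] at hcas
  have h₂ := cast_fib_add_two (R := ℝ) n
  have h₃ := cast_fib_add_two (R := ℝ) (n + 1)
  have h₄ := cast_fib_add_two (R := ℝ) (n + 2)
  have h₅ := cast_fib_add_two (R := ℝ) (n + 3)
  have ha : (0 : ℝ) < fib (n + 2) := by exact_mod_cast Nat.fib_pos.2 (by omega)
  have hb : (0 : ℝ) < fib (n + 3) := by exact_mod_cast Nat.fib_pos.2 (by omega)
  push_cast
  rw [div_sub_div _ _ (by positivity) (by positivity), one_sub_div (by positivity),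
    div_eq_div_iff (by positivity) (by positivity)]
  grind
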